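/- Let U and Ũ be n×k real matrices each with orthonormal columns. Then there exists a k×k orthogonal matrix O such that ‖Ũ - U O‖ ≤ 2‖(I - U Uᵀ) Ũ‖, where ‖·‖ is the spectral norm. -/

import Mathlib

/-!
Put `M = Uᵀ Ũ` and `N = (I - U Uᵀ) Ũ`, so that `Ũ = U M + N` and `Nᵀ N = I - Mᵀ M`.
Take the polar decomposition `M = O S` with `O` orthogonal and `S = √(Mᵀ M)`. Then
`Ũ - U O = N + U O (S - I)`, and the functional calculus for `Mᵀ M` bounds
`‖I - S‖² ≤ ‖I - Mᵀ M‖ = ‖N‖²`, because `(1 - √x)² ≤ |1 - x|` for every real `x`.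
-/

open Matrix

/-- The spectral (ℓ²-operator) norm of a rectangular real matrix. -/
noncomputable def specNorm {m n : ℕ} (A : Matrix (Fin m) (Fin n) ℝ) : ℝ :=
  ‖LinearMap.toContinuousLinearMap (Matrix.toEuclideanLin A)‖

open scoped Matrix.Norms.L2Operator

lemma sq_one_sub_sqrt_le_abs_one_sub (x : ℝ) : (1 - √x) ^ 2 ≤ |1 - x| := by
  rcases lt_or_ge x 0 with hx | hx
  · rw [Real.sqrt_eq_zero_of_nonpos hx.le, abs_of_pos (by linarith)]
    linarith
  · have hs := Real.sqrt_nonneg x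
    calc (1 - √x) ^ 2 = |1 - √x| * |1 - √x| := by rw [abs_mul_abs_self, sq]
      _ ≤ |1 - √x| * (1 + √x) := by gcongr; exact abs_sub_le_iff.2 ⟨by linarith, by linarith⟩
      _ = |1 - x| := by
        rw [← abs_of_nonneg (by linarith : 0 ≤ 1 + √x), ← abs_mul]
        congr 1
        linear_combination -Real.mul_self_sqrt hx

section SqrtFunctionalCalculus

variable {A : Type*} [NormedRing A] [StarRing A] [NormedAlgebra ℝ A]
  [IsometricContinuousFunctionalCalculus ℝ A IsSelfAdjoint]

lemma cfc_sqrt_mul_cfc_sqrt_self {a : A} (ha : ∀ x ∈ spectrum ℝ a, 0 ≤ x)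
    (ha' : IsSelfAdjoint a := by cfc_tac) : cfc Real.sqrt a * cfc Real.sqrt a = a := by
  rw [← cfc_mul ..]
  exact (cfc_congr fun x hx => Real.mul_self_sqrt (ha x hx)).trans (cfc_id' ℝ a)

lemma norm_one_sub_cfc_sqrt_sq_le (a : A) (ha : IsSelfAdjoint a := by cfc_tac) :
    ‖1 - cfc Real.sqrt a‖ ^ 2 ≤ ‖1 - a‖ := by
  have h_sqrt : 1 - cfc Real.sqrt a = cfc (fun x : ℝ => 1 - √x) a := by
    rw [cfc_sub .., cfc_const_one ..]
  have h_id : 1 - a = cfc (fun x : ℝ => 1 - x) a := by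
    rw [cfc_sub .., cfc_const_one .., cfc_id' ..]
  have hbound : ‖1 - cfc Real.sqrt a‖ ≤ √‖1 - a‖ := by
    rw [h_sqrt]
    refine norm_cfc_le (Real.sqrt_nonneg _) fun x hx => Real.abs_le_sqrt ?_
    calc (1 - √x) ^ 2 ≤ |1 - x| := sq_one_sub_sqrt_le_abs_one_sub x
      _ ≤ ‖1 - a‖ := h_id ▸ norm_apply_le_norm_cfc (fun x : ℝ => 1 - x) a hx
  calc ‖1 - cfc Real.sqrt a‖ ^ 2 ≤ √‖1 - a‖ ^ 2 := by gcongr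
    _ = ‖1 - a‖ := Real.sq_sqrt (norm_nonneg _)

end SqrtFunctionalCalculus

theorem LinearMap.exists_linearIsometry_comp_eq_of_norm_eq {𝕜 E : Type*} [RCLike 𝕜]
    [NormedAddCommGroup E] [InnerProductSpace 𝕜 E] [FiniteDimensional 𝕜 E] {S T : E →ₗ[𝕜] E}
    (h : ∀ x, ‖T x‖ = ‖S x‖) : ∃ O : E →ₗᵢ[𝕜] E, ∀ x, O (S x) = T x := by
  have hker : ker S ≤ ker T := fun x hx => by
    rw [mem_ker] at hx ⊢
    rw [← norm_eq_zero, h, hx, norm_zero]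
  -- `S x ↦ T x` is a well-defined isometry on the range of `S`; extend it to all of `E`.
  let g : range S →ₗ[𝕜] E := (ker S).liftQ T hker ∘ₗ S.quotKerEquivRange.symm.toLinearMap
  have hg : ∀ x, g ⟨S x, mem_range_self S x⟩ = T x := fun x => by
    simp only [g, comp_apply, LinearEquiv.coe_coe, quotKerEquivRange_symm_apply_image]
    rfl
  let L : range S →ₗᵢ[𝕜] E := ⟨g, by rintro ⟨_, x, rfl⟩; exact (congrArg norm (hg x)).trans (h x)⟩
  exact ⟨L.extend, fun x => (L.extend_apply ⟨S x, mem_range_self S x⟩).trans (hg x)⟩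

theorem ContinuousLinearMap.exists_star_mul_self_eq_one_and_eq_mul {𝕜 E : Type*} [RCLike 𝕜]
    [NormedAddCommGroup E] [InnerProductSpace 𝕜 E] [CompleteSpace E] [FiniteDimensional 𝕜 E]
    {S T : E →L[𝕜] E} (h : star S * S = star T * T) :
    ∃ O : E →L[𝕜] E, star O * O = 1 ∧ T = O * S := by
  have hnorm : ∀ x, ‖T x‖ = ‖S x‖ := fun x => by
    have := congr(RCLike.re (inner 𝕜 ($h x) x))
    simp only [star_eq_adjoint, mul_def, ← apply_norm_sq_eq_inner_adjoint_left] at this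
    exact (pow_left_inj₀ (norm_nonneg _) (norm_nonneg _) two_ne_zero).mp this.symm
  obtain ⟨O, hO⟩ := LinearMap.exists_linearIsometry_comp_eq_of_norm_eq
    (S := S.toLinearMap) (T := T.toLinearMap) hnorm
  refine ⟨O.toContinuousLinearMap, ?_, ?_⟩
  · rw [star_eq_adjoint]
    exact O.adjoint_comp_self
  · ext x
    exact (hO x).symm

namespace Matrix

variable {𝕜 : Type*} [RCLike 𝕜]

theorem exists_conjTranspose_mul_self_eq_one_and_eq_mul {n : Type*} [Fintype n] [DecidableEq n]
    {S M : Matrix n n 𝕜} (h : Sᴴ * S = Mᴴ * M) : ∃ O : Matrix n n 𝕜, Oᴴ * O = 1 ∧ M = O * S := by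
  let e := toEuclideanCLM (𝕜 := 𝕜) (n := n)
  have h' : star (e S) * e S = star (e M) * e M := by
    simpa only [← map_star, ← map_mul, star_eq_conjTranspose] using congr(e $h)
  obtain ⟨O, hO, hMOS⟩ := ContinuousLinearMap.exists_star_mul_self_eq_one_and_eq_mul h'
  obtain ⟨O, rfl⟩ : ∃ O', e O' = O := e.surjective O
  rw [← map_star, ← map_mul, ← map_one e] at hO
  rw [← map_mul] at hMOS
  exact ⟨O, e.injective hO, e.injective hMOS⟩

theorem l2_opNorm_mul_of_conjTranspose_mul_self_eq_one {l m n : Type*} [Fintype l] [Fintype m]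
    [Fintype n] [DecidableEq l] [DecidableEq n] {V : Matrix m n 𝕜} (hV : Vᴴ * V = 1)
    (A : Matrix n l 𝕜) : ‖V * A‖ = ‖A‖ := by
  refine (mul_self_inj (norm_nonneg _) (norm_nonneg _)).mp ?_
  rw [← l2_opNorm_conjTranspose_mul_self, ← l2_opNorm_conjTranspose_mul_self, conjTranspose_mul,
    Matrix.mul_assoc, ← Matrix.mul_assoc Vᴴ, hV, Matrix.one_mul]

theorem conjTranspose_mul_self_one_sub_mul_conjTranspose_mul {l m n : Type*} [Fintype m]
    [Fintype n] [DecidableEq m] [DecidableEq n] {U : Matrix m n 𝕜} (hU : Uᴴ * U = 1)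
    (X : Matrix m l 𝕜) :
    ((1 - U * Uᴴ) * X)ᴴ * ((1 - U * Uᴴ) * X) = Xᴴ * X - (Uᴴ * X)ᴴ * (Uᴴ * X) := by
  have hP : IsIdempotentElem (U * Uᴴ) := by
    rw [IsIdempotentElem, Matrix.mul_assoc, ← Matrix.mul_assoc Uᴴ, hU, Matrix.one_mul]
  have hQ : (1 - U * Uᴴ)ᴴ * (1 - U * Uᴴ) = 1 - U * Uᴴ := by
    rw [conjTranspose_sub, conjTranspose_one, conjTranspose_mul, conjTranspose_conjTranspose]
    exact hP.one_sub
  calc ((1 - U * Uᴴ) * X)ᴴ * ((1 - U * Uᴴ) * X) = Xᴴ * ((1 - U * Uᴴ)ᴴ * (1 - U * Uᴴ)) * X := by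
        simp only [conjTranspose_mul, Matrix.mul_assoc]
    _ = Xᴴ * X - (Uᴴ * X)ᴴ * (Uᴴ * X) := by
        simp only [hQ, conjTranspose_mul, conjTranspose_conjTranspose, Matrix.mul_sub,
          Matrix.sub_mul, Matrix.mul_one, Matrix.mul_assoc]

end Matrix

/-- Alignment of orthonormal frames: if `U, Ũ ∈ ℝ^{n×k}` have orthonormal columns,
there is an orthogonal `O ∈ ℝ^{k×k}` with `‖Ũ - U O‖ ≤ 2 ‖(I - U Uᵀ) Ũ‖`. -/
theorem orthonormal_basis_alignment {n k : ℕ}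
    (U Ut : Matrix (Fin n) (Fin k) ℝ)
    (hU : Uᵀ * U = 1) (hUt : Utᵀ * Ut = 1) :
    ∃ O : Matrix (Fin k) (Fin k) ℝ, Oᵀ * O = 1 ∧
      specNorm (Ut - U * O) ≤ 2 * specNorm ((1 - U * Uᵀ) * Ut) := by
  simp only [← conjTranspose_eq_transpose_of_trivial] at hU hUt ⊢
  set M := Uᴴ * Ut with hM
  set N := (1 - U * Uᴴ) * Ut with hN
  have hNN : Nᴴ * N = 1 - Mᴴ * M := by
    rw [conjTranspose_mul_self_one_sub_mul_conjTranspose_mul hU, hUt]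
  have hspec : ∀ x ∈ spectrum ℝ (Mᴴ * M), 0 ≤ x :=
    (posSemidef_iff_isHermitian_and_spectrum_nonneg.mp (posSemidef_conjTranspose_mul_self M)).2
  have hsa : IsSelfAdjoint (Mᴴ * M) := .star_mul_self M
  set S := cfc Real.sqrt (Mᴴ * M)
  have hSS : Sᴴ * S = Mᴴ * M := by
    rw [← star_eq_conjTranspose, (cfc_predicate Real.sqrt (Mᴴ * M)).star_eq]
    exact cfc_sqrt_mul_cfc_sqrt_self hspec hsa
  obtain ⟨O, hO, hMOS⟩ := exists_conjTranspose_mul_self_eq_one_and_eq_mul hSS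
  refine ⟨O, hO, ?_⟩
  have hSN : ‖1 - S‖ ≤ ‖N‖ := by
    have := norm_one_sub_cfc_sqrt_sq_le (Mᴴ * M) hsa
    rw [← hNN, l2_opNorm_conjTranspose_mul_self] at this
    nlinarith [norm_nonneg (1 - S), norm_nonneg N]
  have hsplit : Ut - U * O = N + U * (O * (S - 1)) := by
    rw [Matrix.mul_sub O, Matrix.mul_one, ← hMOS, hN, hM, Matrix.sub_mul, Matrix.one_mul,
      Matrix.mul_sub, Matrix.mul_assoc]
    abel
  calc specNorm (Ut - U * O) = ‖N + U * (O * (S - 1))‖ := by rw [hsplit]; rfl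
    _ ≤ ‖N‖ + ‖U * (O * (S - 1))‖ := norm_add_le _ _
    _ = ‖N‖ + ‖1 - S‖ := by
      rw [l2_opNorm_mul_of_conjTranspose_mul_self_eq_one hU,
        l2_opNorm_mul_of_conjTranspose_mul_self_eq_one hO, norm_sub_rev]
    _ ≤ ‖N‖ + ‖N‖ := by gcongr
    _ = 2 * specNorm N := (two_mul _).symm
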